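/- Let T ⊆ ℂ be the unit circle and let γ₁,...,γ₁₆ ∈ T. Suppose c_r ∈ ℝ, r ≥ 0, satisfy ∑_r c_r X^r = g(X) · ∏_{k=1}^{16}(1 - γ_k X)^{-1} for |X| < 1 with g a polynomial of degree ≤ 14 and g not divisible by all of the factors (1 - γ_k X) (i.e., the rational function has at least one pole on the unit circle). If γ_k ≠ 1 for all k and the pole set is nonempty, then the sequence (c_r) changes sign infinitely often. -/

import Mathlib

set_option maxHeartbeats 1000000

open PowerSeries Finset Filter Topology

private lemma geom_inv (γ : ℂ) :
    (1 - PowerSeries.C γ * PowerSeries.X) * PowerSeries.mk (fun n => γ ^ n) = 1 := by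
  ext n
  rw [sub_mul, one_mul, map_sub, mul_assoc]
  rcases n with _ | m
  · simp
  · simp [PowerSeries.coeff_succ_X_mul, pow_succ']

private lemma aux_pow_bound (n : ℕ) : ((n : ℝ) + 1) ^ 16 ≤ 2 ^ 16 * ((n : ℝ) ^ 16 + 1) := by
  rcases Nat.eq_zero_or_pos n with h | h
  · subst h; norm_num
  · have h1 : (1 : ℝ) ≤ (n : ℝ) := by exact_mod_cast h
    have : ((n : ℝ) + 1) ^ 16 ≤ (2 * (n : ℝ)) ^ 16 := by
      apply pow_le_pow_left₀ (by positivity)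
      linarith
    calc ((n : ℝ) + 1) ^ 16 ≤ (2 * (n : ℝ)) ^ 16 := this
      _ = 2 ^ 16 * (n : ℝ) ^ 16 := by ring
      _ ≤ 2 ^ 16 * ((n : ℝ) ^ 16 + 1) := by nlinarith

private lemma core_false (c : ℕ → ℝ) (γ : Fin 16 → ℂ)
    (hγ : ∀ k, ‖γ k‖ = 1)
    (g : Polynomial ℂ) (hdeg : g.degree ≤ 14)
    (hser : (PowerSeries.mk fun r => (c r : ℂ)) *
        ∏ k : Fin 16, (1 - PowerSeries.C (γ k) * PowerSeries.X) = (g : PowerSeries ℂ))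
    (hpole : ∃ k : Fin 16, Polynomial.eval (γ k)⁻¹ g ≠ 0)
    (hne1 : ∀ k, γ k ≠ 1) (N : ℕ) (hpos : ∀ r, N < r → 0 ≤ c r) : False := by
  classical
  -- the denominator polynomial
  set P : Polynomial ℂ := ∏ k : Fin 16, (1 - Polynomial.C (γ k) * Polynomial.X) with hP
  have hγ0 : ∀ k, γ k ≠ 0 := by
    intro k hk
    have := hγ k
    rw [hk] at this
    simp at this
  have hPQ : (P : PowerSeries ℂ) = ∏ k : Fin 16, (1 - PowerSeries.C (γ k) * PowerSeries.X) := by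
    rw [hP, ← Polynomial.coeToPowerSeries.ringHom_apply, map_prod]
    refine Finset.prod_congr rfl fun k _ => ?_
    simp [Polynomial.coeToPowerSeries.ringHom_apply]
  have hser' : (PowerSeries.mk fun r => (c r : ℂ)) * (P : PowerSeries ℂ) = (g : PowerSeries ℂ) := by
    rw [hPQ]; exact hser
  have hPdeg : P.natDegree ≤ 16 := by
    refine le_trans (Polynomial.natDegree_prod_le _ _) ?_
    have : ∀ k : Fin 16, (1 - Polynomial.C (γ k) * Polynomial.X).natDegree ≤ 1 := by
      intro k
      refine le_trans (Polynomial.natDegree_sub_le _ _) ?_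
      rw [Polynomial.natDegree_one, Polynomial.natDegree_C_mul_X _ (hγ0 k)]
      norm_num
    have h2 : ∑ k : Fin 16, (1 - Polynomial.C (γ k) * Polynomial.X).natDegree
        ≤ ∑ _k : Fin 16, 1 := Finset.sum_le_sum fun k _ => this k
    simpa using h2
  have hgnat : g.natDegree ≤ 14 := Polynomial.natDegree_le_iff_degree_le.2 hdeg
  -- nonvanishing of P inside the disc and at 1
  have hPne : ∀ x : ℂ, ‖x‖ < 1 → Polynomial.eval x P ≠ 0 := by
    intro x hx
    rw [hP, Polynomial.eval_prod]
    refine Finset.prod_ne_zero_iff.2 fun k _ => ?_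
    simp only [Polynomial.eval_sub, Polynomial.eval_one, Polynomial.eval_mul,
      Polynomial.eval_C, Polynomial.eval_X]
    intro h
    have h1 : γ k * x = 1 := by linear_combination -h
    have := congrArg (‖·‖) h1
    rw [norm_mul, hγ k, one_mul] at this
    simp [this] at hx
  have hP1 : Polynomial.eval 1 P ≠ 0 := by
    rw [hP, Polynomial.eval_prod]
    refine Finset.prod_ne_zero_iff.2 fun k _ => ?_
    simp only [Polynomial.eval_sub, Polynomial.eval_one, Polynomial.eval_mul,
      Polynomial.eval_C, Polynomial.eval_X, mul_one]
    exact sub_ne_zero.2 fun h => (hne1 k) h.symm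
  -- mk c = g * product of geometric series
  set G : PowerSeries ℂ := ∏ k : Fin 16, PowerSeries.mk (fun n => γ k ^ n) with hG
  have hcg : (PowerSeries.mk fun r => (c r : ℂ)) = (g : PowerSeries ℂ) * G := by
    have hQG : (∏ k : Fin 16, (1 - PowerSeries.C (γ k) * PowerSeries.X)) * G = 1 := by
      rw [hG, ← Finset.prod_mul_distrib]
      simp [geom_inv]
    have h2 : (PowerSeries.mk fun r => (c r : ℂ)) *
        ((∏ k : Fin 16, (1 - PowerSeries.C (γ k) * PowerSeries.X)) * G) =
        (g : PowerSeries ℂ) * G := by rw [← mul_assoc, hser]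
    rw [hQG, mul_one] at h2
    exact h2
  -- coefficient bound
  set M : ℝ := ∑ i ∈ Finset.range 15, ‖g.coeff i‖ with hM
  have hM0 : 0 ≤ M := Finset.sum_nonneg fun i _ => (norm_nonneg _)
  have hgcoeff : ∀ n, ‖g.coeff n‖ ≤ M := by
    intro n
    rcases lt_or_ge n 15 with h | h
    · exact Finset.single_le_sum (f := fun i => ‖g.coeff i‖)
        (fun i _ => norm_nonneg _) (Finset.mem_range.2 h)
    · have : g.coeff n = 0 := Polynomial.coeff_eq_zero_of_natDegree_lt (lt_of_le_of_lt hgnat h)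
      simp [this, hM0]
  have key : ∀ s : Finset (Fin 16), ∀ n : ℕ,
      ‖PowerSeries.coeff n ((g : PowerSeries ℂ) *
        ∏ k ∈ s, PowerSeries.mk (fun m => γ k ^ m))‖ ≤ M * ((n : ℝ) + 1) ^ s.card := by
    intro s
    induction s using Finset.induction_on with
    | empty =>
      intro n
      simpa [Polynomial.coeff_coe] using hgcoeff n
    | @insert a s ha ih =>
      intro n
      rw [Finset.prod_insert ha, show (g : PowerSeries ℂ) *
          (PowerSeries.mk (fun m => γ a ^ m) * ∏ k ∈ s, PowerSeries.mk (fun m => γ k ^ m)) =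
          ((g : PowerSeries ℂ) * ∏ k ∈ s, PowerSeries.mk (fun m => γ k ^ m)) *
          PowerSeries.mk (fun m => γ a ^ m) by ring]
      rw [PowerSeries.coeff_mul]
      refine le_trans (norm_sum_le _ _) ?_
      have hcard : (Finset.HasAntidiagonal.antidiagonal n).card = n + 1 := Finset.Nat.card_antidiagonal n
      have hterm : ∀ p ∈ Finset.HasAntidiagonal.antidiagonal n,
          ‖PowerSeries.coeff p.1 ((g : PowerSeries ℂ) *
            ∏ k ∈ s, PowerSeries.mk (fun m => γ k ^ m)) *
            PowerSeries.coeff p.2 (PowerSeries.mk fun m => γ a ^ m)‖ ≤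
          M * ((n : ℝ) + 1) ^ s.card := by
        intro p hp
        rw [norm_mul]
        have h1 : ‖PowerSeries.coeff p.2 (PowerSeries.mk fun m => γ a ^ m)‖ = 1 := by
          simp [norm_pow, hγ a]
        rw [h1, mul_one]
        refine le_trans (ih p.1) ?_
        have hp1 : p.1 ≤ n := by
          have := Finset.HasAntidiagonal.mem_antidiagonal.1 hp
          omega
        have : ((p.1 : ℝ) + 1) ^ s.card ≤ ((n : ℝ) + 1) ^ s.card := by
          apply pow_le_pow_left₀ (by positivity)
          have : (p.1 : ℝ) ≤ (n : ℝ) := by exact_mod_cast hp1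
          linarith
        nlinarith [this, hM0]
      refine le_trans (Finset.sum_le_sum hterm) ?_
      rw [Finset.sum_const, hcard, Finset.card_insert_of_notMem ha, nsmul_eq_mul]
      have : ((n : ℝ) + 1) * (M * ((n : ℝ) + 1) ^ s.card) = M * ((n:ℝ)+1)^(s.card + 1) := by ring
      push_cast
      rw [this]
  have hbound : ∀ n : ℕ, |c n| ≤ M * ((n : ℝ) + 1) ^ 16 := by
    intro n
    have h1 : ‖(c n : ℂ)‖ ≤ M * ((n : ℝ) + 1) ^ 16 := by
      have := key Finset.univ n
      rw [← hG] at this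
      rw [← hcg] at this
      simpa using this
    simpa using h1
  -- summability on the open unit disc
  have hsum : ∀ x : ℂ, ‖x‖ < 1 → Summable (fun n => ‖(c n : ℂ) * x ^ n‖) := by
    intro x hx
    have hx0 : (0:ℝ) ≤ ‖x‖ := norm_nonneg x
    have hs1 : Summable (fun n : ℕ => (n:ℝ)^16 * ‖x‖^n) := by
      have hn : ‖‖x‖‖ < 1 := by rwa [Real.norm_eq_abs, abs_of_nonneg hx0]
      simpa using summable_pow_mul_geometric_of_norm_lt_one 16 hn
    have hs2 : Summable (fun n : ℕ => ‖x‖^n) := summable_geometric_of_lt_one hx0 hx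
    have hs : Summable (fun n : ℕ =>
        (M * 2^16) * ((n:ℝ)^16 * ‖x‖^n + ‖x‖^n)) :=
      (hs1.add hs2).mul_left _
    refine Summable.of_nonneg_of_le (fun n => norm_nonneg _) (fun n => ?_) hs
    rw [norm_mul, norm_pow, Complex.norm_real, Real.norm_eq_abs]
    have h2 : |c n| ≤ M * ((n:ℝ)+1)^16 := hbound n
    have h3 : ((n:ℝ)+1)^16 ≤ 2^16 * ((n:ℝ)^16 + 1) := aux_pow_bound n
    have h4 : (0:ℝ) ≤ ‖x‖^n := pow_nonneg hx0 n
    calc |c n| * ‖x‖^n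
        ≤ (M * ((n:ℝ)+1)^16) * ‖x‖^n := mul_le_mul_of_nonneg_right h2 h4
      _ ≤ (M * (2^16 * ((n:ℝ)^16+1))) * ‖x‖^n :=
          mul_le_mul_of_nonneg_right (mul_le_mul_of_nonneg_left h3 hM0) h4
      _ = (M*2^16) * ((n:ℝ)^16 * ‖x‖^n + ‖x‖^n) := by ring
  have hsumC : ∀ x : ℂ, ‖x‖ < 1 → Summable (fun n => (c n : ℂ) * x ^ n) := by
    intro x hx
    refine Summable.of_norm ?_
    simpa using hsum x hx
  set F : ℂ → ℂ := fun x => ∑' n, (c n : ℂ) * x ^ n with hFdef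
  -- the functional equation on the disc
  have hFP : ∀ x : ℂ, ‖x‖ < 1 → F x * Polynomial.eval x P = Polynomial.eval x g := by
    intro x hx
    have ha : Summable fun n => ‖(c n : ℂ) * x ^ n‖ := by
      simpa using hsum x hx
    have hb : Summable fun n => ‖(P.coeff n : ℂ) * x ^ n‖ := by
      apply summable_of_ne_finset_zero (s := Finset.range 17)
      intro n hn
      have hn' : 16 < n := by simp only [Finset.mem_range, not_lt] at hn; omega
      have : P.coeff n = 0 :=
        Polynomial.coeff_eq_zero_of_natDegree_lt (lt_of_le_of_lt hPdeg hn')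
      simp [this]
    have hcauchy := tsum_mul_tsum_eq_tsum_sum_antidiagonal_of_summable_norm ha hb
    have hbsum : ∑' n, (P.coeff n : ℂ) * x ^ n = Polynomial.eval x P := by
      rw [tsum_eq_sum (s := Finset.range 17) (fun n hn => by
        have hn' : 16 < n := by simp [Finset.mem_range] at hn; omega
        have : P.coeff n = 0 :=
          Polynomial.coeff_eq_zero_of_natDegree_lt (lt_of_le_of_lt hPdeg hn')
        simp [this])]
      exact (Polynomial.eval_eq_sum_range' (lt_of_le_of_lt hPdeg (by norm_num)) x).symm
    have hinner : ∀ n : ℕ, ∑ p ∈ Finset.HasAntidiagonal.antidiagonal n,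
        ((c p.1 : ℂ) * x^p.1) * ((P.coeff p.2 : ℂ) * x^p.2) = g.coeff n * x^n := by
      intro n
      have e1 : ∀ p ∈ Finset.HasAntidiagonal.antidiagonal n,
          ((c p.1 : ℂ) * x^p.1) * ((P.coeff p.2 : ℂ) * x^p.2) =
          ((c p.1 : ℂ) * P.coeff p.2) * x^n := by
        intro p hp
        have hpn : p.1 + p.2 = n := Finset.HasAntidiagonal.mem_antidiagonal.1 hp
        rw [← hpn, pow_add]; ring
      rw [Finset.sum_congr rfl e1, ← Finset.sum_mul]
      congr 1
      have hco := congrArg (PowerSeries.coeff n) hser'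
      rw [PowerSeries.coeff_mul] at hco
      simpa [PowerSeries.coeff_mk, Polynomial.coeff_coe] using hco
    rw [hbsum] at hcauchy
    rw [hFdef]
    simp only []
    rw [hcauchy, tsum_congr hinner,
      tsum_eq_sum (s := Finset.range 15) (fun n hn => by
        have hn' : 14 < n := by simp [Finset.mem_range] at hn; omega
        have : g.coeff n = 0 :=
          Polynomial.coeff_eq_zero_of_natDegree_lt (lt_of_le_of_lt hgnat hn')
        simp [this])]
    exact (Polynomial.eval_eq_sum_range' (lt_of_le_of_lt hgnat (by norm_num)) x).symm
  -- bound near t = 1 on the reals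
  have hPt : ∀ t : ℝ, t ∈ Set.Icc (1/2:ℝ) 1 → Polynomial.eval ((t:ℂ)) P ≠ 0 := by
    intro t ht
    rcases eq_or_lt_of_le ht.2 with h | h
    · rw [h]; exact_mod_cast hP1
    · apply hPne
      rw [Complex.norm_real, Real.norm_eq_abs, abs_of_nonneg (le_trans (by norm_num) ht.1)]
      exact h
  set q : ℝ → ℝ := fun t => ‖Polynomial.eval (t:ℂ) g / Polynomial.eval (t:ℂ) P‖
    with hq
  have hqcont : ContinuousOn q (Set.Icc (1/2:ℝ) 1) := by
    apply continuous_norm.comp_continuousOn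
    exact ContinuousOn.div
      ((g.continuous.comp Complex.continuous_ofReal).continuousOn)
      ((P.continuous.comp Complex.continuous_ofReal).continuousOn)
      hPt
  obtain ⟨t0, ht0, hmax'⟩ := isCompact_Icc.exists_isMaxOn
    (Set.nonempty_Icc.2 (by norm_num : (1/2:ℝ) ≤ 1)) hqcont
  have hmax : ∀ t ∈ Set.Icc (1/2:ℝ) 1, q t ≤ q t0 := fun t ht => hmax' ht
  set B : ℝ := q t0 with hB
  have hB0 : 0 ≤ B := norm_nonneg _
  -- real-valued bound for the tsum
  have hsumR : ∀ t : ℝ, t ∈ Set.Ico (1/2:ℝ) 1 → Summable (fun n => c n * t ^ n) := by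
    intro t ht
    have ht0' : (0:ℝ) ≤ t := le_trans (by norm_num) ht.1
    have habs : ‖(t:ℂ)‖ < 1 := by
      rw [Complex.norm_real, Real.norm_eq_abs, abs_of_nonneg ht0']; exact ht.2
    refine Summable.of_abs ?_
    have := hsum (t:ℂ) habs
    refine this.congr fun n => ?_
    simp only [norm_mul, norm_pow, Complex.norm_real, Real.norm_eq_abs, abs_mul, abs_pow]
  have hFr : ∀ t : ℝ, t ∈ Set.Ico (1/2:ℝ) 1 → |∑' n, c n * t ^ n| ≤ B := by
    intro t ht
    have ht0' : (0:ℝ) ≤ t := le_trans (by norm_num) ht.1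
    have habs : ‖(t:ℂ)‖ < 1 := by
      rw [Complex.norm_real, Real.norm_eq_abs, abs_of_nonneg ht0']; exact ht.2
    have hcoe : ((∑' n, c n * t ^ n : ℝ) : ℂ) = F (t:ℂ) := by
      rw [Complex.ofReal_tsum]
      exact tsum_congr fun n => by push_cast; ring
    have h1 : |∑' n, c n * t ^ n| = ‖F (t:ℂ)‖ := by
      rw [← hcoe, Complex.norm_real, Real.norm_eq_abs]
    rw [h1]
    have hPt' : Polynomial.eval ((t:ℂ)) P ≠ 0 := hPt t ⟨ht.1, le_of_lt ht.2⟩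
    have : F (t:ℂ) = Polynomial.eval (t:ℂ) g / Polynomial.eval (t:ℂ) P :=
      (eq_div_iff hPt').2 (hFP _ habs)
    rw [this]
    exact hmax t ⟨ht.1, le_of_lt ht.2⟩
  -- partial sums of c are bounded
  set S : ℝ := ∑ r ∈ Finset.range (N+1), |c r| with hS
  have hS0 : 0 ≤ S := Finset.sum_nonneg fun i _ => abs_nonneg _
  have hpartial : ∀ R : ℕ, ∑ r ∈ Finset.Ico (N+1) R, c r ≤ B + S := by
    intro R
    rcases le_or_gt R (N+1) with hR | hR
    · rw [Finset.Ico_eq_empty (by omega)]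
      simp only [Finset.sum_empty]
      linarith
    · have hstep : ∀ t : ℝ, t ∈ Set.Ico (1/2:ℝ) 1 →
          ∑ r ∈ Finset.Ico (N+1) R, c r * t ^ r ≤ B + S := by
        intro t ht
        have ht0' : (0:ℝ) ≤ t := le_trans (by norm_num) ht.1
        have h1 : ∑ r ∈ Finset.range R, c r * t ^ r ≤ ∑' n, c n * t ^ n := by
          refine (hsumR t ht).sum_le_tsum _ (fun i hi => ?_)
          have hiN : N < i := by
            simp only [Finset.mem_range, not_lt] at hi; omega
          exact mul_nonneg (hpos i hiN) (pow_nonneg ht0' i)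
        have h2 : ∑ r ∈ Finset.Ico (N+1) R, c r * t ^ r =
            ∑ r ∈ Finset.range R, c r * t ^ r - ∑ r ∈ Finset.range (N+1), c r * t ^ r :=
          Finset.sum_Ico_eq_sub _ (le_of_lt hR)
        have h3 : |∑ r ∈ Finset.range (N+1), c r * t ^ r| ≤ S := by
          refine le_trans (Finset.abs_sum_le_sum_abs _ _) ?_
          refine Finset.sum_le_sum fun i _ => ?_
          rw [abs_mul, abs_pow, abs_of_nonneg ht0']
          have hle1 : t ^ i ≤ 1 := pow_le_one₀ ht0' (le_of_lt ht.2)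
          nlinarith [abs_nonneg (c i), pow_nonneg ht0' i]
        have h4 : ∑' n, c n * t ^ n ≤ B := le_of_abs_le (hFr t ht)
        have h5 : -S ≤ ∑ r ∈ Finset.range (N+1), c r * t ^ r := by
          have := neg_abs_le (∑ r ∈ Finset.range (N+1), c r * t ^ r)
          linarith
        linarith
      have hcontsum : Continuous (fun t : ℝ => ∑ r ∈ Finset.Ico (N+1) R, c r * t ^ r) :=
        continuous_finset_sum _ fun i _ => continuous_const.mul (continuous_pow i)
      have htend : Tendsto (fun t : ℝ => ∑ r ∈ Finset.Ico (N+1) R, c r * t ^ r)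
          (𝓝[<] (1:ℝ)) (𝓝 (∑ r ∈ Finset.Ico (N+1) R, c r * (1:ℝ) ^ r)) :=
        (hcontsum.tendsto 1).mono_left nhdsWithin_le_nhds
      have hev : ∀ᶠ t in 𝓝[<] (1:ℝ), ∑ r ∈ Finset.Ico (N+1) R, c r * t ^ r ≤ B + S := by
        have h5 : ∀ᶠ t in 𝓝[<] (1:ℝ), (1/2:ℝ) < t :=
          eventually_nhdsWithin_of_eventually_nhds (eventually_gt_nhds (by norm_num))
        have h6 : ∀ᶠ t in 𝓝[<] (1:ℝ), t < 1 := eventually_mem_nhdsWithin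
        filter_upwards [h5, h6] with t h5' h6'
        exact hstep t ⟨le_of_lt h5', h6'⟩
      have := le_of_tendsto htend hev
      simpa using this
  -- absolute summability of c
  have hsummC : Summable (fun n => |c n|) := by
    have h1 : Summable (fun n => c (N+1+n)) := by
      refine summable_of_sum_range_le (c := B + S) (fun n => hpos _ (by omega)) (fun n => ?_)
      have := hpartial (N+1+n)
      rwa [Finset.sum_Ico_eq_sum_range, show N+1+n - (N+1) = n by omega] at this
    have h2 : Summable (fun n => |c (N+1+n)|) :=
      h1.congr fun n => (abs_of_nonneg (hpos _ (by omega))).symm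
    have h3 : Summable (fun n => |c (n + (N+1))|) :=
      h2.congr fun n => by rw [add_comm]
    exact (summable_nat_add_iff (N+1)).1 h3
  set Ct : ℝ := ∑' n, |c n| with hCtdef
  have hCt0 : 0 ≤ Ct := tsum_nonneg fun n => abs_nonneg _
  -- uniform bound for F on the disc
  have hFb : ∀ x : ℂ, ‖x‖ < 1 → ‖F x‖ ≤ Ct := by
    intro x hx
    have ha : Summable fun n => ‖(c n : ℂ) * x ^ n‖ := by
      simpa using hsum x hx
    have h1 : ‖F x‖ ≤ ∑' n, ‖(c n : ℂ) * x ^ n‖ := norm_tsum_le_tsum_norm ha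
    refine le_trans h1 (ha.tsum_le_tsum (fun n => ?_) hsummC)
    rw [norm_mul, norm_pow, Complex.norm_real, Real.norm_eq_abs]
    have hx1 : ‖x‖ ^ n ≤ 1 :=
      pow_le_one₀ (norm_nonneg x) (le_of_lt hx)
    nlinarith [abs_nonneg (c n), pow_nonneg (norm_nonneg x) n]
  -- final contradiction near the pole
  obtain ⟨j, hj⟩ := hpole
  set z : ℂ := (γ j)⁻¹ with hzdef
  have hzabs : ‖z‖ = 1 := by rw [hzdef, norm_inv, hγ j]; norm_num
  have hPz : Polynomial.eval z P = 0 := by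
    rw [hP, Polynomial.eval_prod]
    refine Finset.prod_eq_zero (Finset.mem_univ j) ?_
    simp [hzdef, mul_inv_cancel₀ (hγ0 j)]
  have hineq : ∀ᶠ (t : ℝ) in 𝓝[<] (1:ℝ),
      ‖Polynomial.eval ((t:ℂ) * z) g‖ ≤
      Ct * ‖Polynomial.eval ((t:ℂ) * z) P‖ := by
    have h5 : ∀ᶠ t in 𝓝[<] (1:ℝ), (0:ℝ) < t :=
      eventually_nhdsWithin_of_eventually_nhds (eventually_gt_nhds (by norm_num))
    have h6 : ∀ᶠ t in 𝓝[<] (1:ℝ), t < 1 := eventually_mem_nhdsWithin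
    filter_upwards [h5, h6] with t h5' h6'
    have habs : ‖(t:ℂ) * z‖ < 1 := by
      rw [norm_mul, hzabs, mul_one, Complex.norm_real, Real.norm_eq_abs, abs_of_pos h5']
      exact h6'
    rw [← hFP _ habs, norm_mul]
    exact mul_le_mul_of_nonneg_right (hFb _ habs) (norm_nonneg _)
  have hc1 : Continuous (fun t : ℝ => ‖Polynomial.eval ((t:ℂ) * z) g‖) :=
    continuous_norm.comp
      (g.continuous.comp (Complex.continuous_ofReal.mul continuous_const))
  have hc2 : Continuous (fun t : ℝ => Ct * ‖Polynomial.eval ((t:ℂ) * z) P‖) :=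
    continuous_const.mul (continuous_norm.comp
      (P.continuous.comp (Complex.continuous_ofReal.mul continuous_const)))
  have ht1 : Tendsto (fun t : ℝ => ‖Polynomial.eval ((t:ℂ) * z) g‖)
      (𝓝[<] (1:ℝ)) (𝓝 (‖Polynomial.eval z g‖)) := by
    have := (hc1.tendsto 1).mono_left (nhdsWithin_le_nhds (s := Set.Iio (1:ℝ)))
    simpa using this
  have ht2 : Tendsto (fun t : ℝ => Ct * ‖Polynomial.eval ((t:ℂ) * z) P‖)
      (𝓝[<] (1:ℝ)) (𝓝 (0:ℝ)) := by
    have := (hc2.tendsto 1).mono_left (nhdsWithin_le_nhds (s := Set.Iio (1:ℝ)))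
    simpa [hPz] using this
  have hfin : ‖Polynomial.eval z g‖ ≤ 0 :=
    le_of_tendsto_of_tendsto ht1 ht2 hineq
  have : Polynomial.eval z g = 0 := by
    have := le_antisymm hfin (norm_nonneg _)
    exact norm_eq_zero.1 this
  exact hj this

/-- If `∑ c_r X^r = g(X)/∏_{k=1}^{16}(1 - γ_k X)` with all `γ_k` on the unit circle,
`deg g ≤ 14`, at least one genuine pole on the unit circle, and `γ_k ≠ 1` for every `k`,
then the real sequence `(c_r)` changes sign infinitely often. -/
theorem sign_changes_of_no_pole_at_one (c : ℕ → ℝ) (γ : Fin 16 → ℂ)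
    (hγ : ∀ k, ‖γ k‖ = 1)
    (g : Polynomial ℂ) (hdeg : g.degree ≤ 14)
    (hser : (PowerSeries.mk fun r => (c r : ℂ)) *
        ∏ k : Fin 16, (1 - PowerSeries.C (γ k) * PowerSeries.X) = (g : PowerSeries ℂ))
    (hpole : ∃ k : Fin 16, Polynomial.eval (γ k)⁻¹ g ≠ 0)
    (hne1 : ∀ k, γ k ≠ 1) :
    ∀ N : ℕ, ∃ r r' : ℕ, N < r ∧ N < r' ∧ c r * c r' < 0 := by
  intro N
  by_contra hcon
  push_neg at hcon
  rcases Classical.em (∀ r, N < r → 0 ≤ c r) with h1 | h1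
  · exact core_false c γ hγ g hdeg hser hpole hne1 N h1
  · push_neg at h1
    obtain ⟨r0, hr0N, hr0⟩ := h1
    have hneg : ∀ r, N < r → 0 ≤ -c r := by
      intro r hr
      have := hcon r0 r hr0N hr
      nlinarith
    refine core_false (fun n => -c n) γ hγ (-g) ?_ ?_ ?_ hne1 N hneg
    · simpa using hdeg
    · have : (PowerSeries.mk fun r => ((-c r : ℝ) : ℂ)) = -(PowerSeries.mk fun r => (c r : ℂ)) := by
        ext n; push_cast; simp
      rw [this, neg_mul, hser]
      push_cast
      ring
    · obtain ⟨k, hk⟩ := hpole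
      exact ⟨k, by simpa using hk⟩
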